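/- For all schemas σ₁ and σ₂, the table compatibility judgment Table(σ₁) ~ Table(σ₂) is derivable if and only if there exists a schema σ such that Table(σ) <: Table(σ₁) and Table(σ) <: Table(σ₂). In particular, if Table(σ₁) and Table(σ₂) are incompatible, then no table type is a subtype of both (no refinement of Table(σ₁) is a subtype of Table(σ₂)). -/

import Mathlib

/-- Column types in the refinement type system. -/
inductive ColTy where
  | top | quantitative | qualitative | discrete | continuous
  | nominal | ordinal | temporal
deriving DecidableEq

/-- The subtyping axioms on column types. -/
inductive ColSubAx : ColTy → ColTy → Prop where
  | quant_top : ColSubAx .quantitative .top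
  | qual_top  : ColSubAx .qualitative .top
  | disc_quant : ColSubAx .discrete .quantitative
  | cont_quant : ColSubAx .continuous .quantitative
  | nom_qual  : ColSubAx .nominal .qualitative
  | ord_qual  : ColSubAx .ordinal .qualitative
  | temp_qual : ColSubAx .temporal .qualitative

/-- Column subtyping: the reflexive-transitive closure of the axioms. -/
def ColSub : ColTy → ColTy → Prop := Relation.ReflTransGen ColSubAx

/-- Two column types are compatible iff one is a subtype of the other. -/
def ColCompat (β₁ β₂ : ColTy) : Prop := ColSub β₁ β₂ ∨ ColSub β₂ β₁

/-- A schema is a finite partial map from column names to column types. -/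
abbrev Schema := Finmap (fun _ : String => ColTy)

/-- Table subtyping (a table type `Table σ` is determined by its schema `σ`;
    since `Finmap` is quotiented by permutation, the permutation rule is implicit). -/
inductive TableSub : Schema → Schema → Prop where
  | width (σ₁ σ₂ : Schema) :
      (∀ c τ, σ₂.lookup c = some τ → σ₁.lookup c = some τ) → TableSub σ₁ σ₂
  | depth (σ₁ σ₂ : Schema) :
      σ₁.keys = σ₂.keys →
      (∀ c τ₁ τ₂, σ₁.lookup c = some τ₁ → σ₂.lookup c = some τ₂ → ColSub τ₁ τ₂) →
      TableSub σ₁ σ₂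
  | trans {σ₁ σ₂ σ₃ : Schema} : TableSub σ₁ σ₂ → TableSub σ₂ σ₃ → TableSub σ₁ σ₃

/-- Table compatibility: every shared column's types are compatible. -/
def TableCompat (σ₁ σ₂ : Schema) : Prop :=
  ∀ c τ₁ τ₂, σ₁.lookup c = some τ₁ → σ₂.lookup c = some τ₂ → ColCompat τ₁ τ₂

/-!
The direct-supertype relation on column types is a tree, so the supertypes of a column type
form a chain: two column types with a common subtype are compatible. Conversely, for compatible
schemas, keeping every column and taking the smaller of the two types on each shared column gives
a common subtype. Both directions rest on the pointwise reading of table subtyping: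
`TableSub σ σ'` holds iff every column of `σ'` occurs in `σ` with a column subtype.
-/

def colSubBool : ColTy → ColTy → Bool
  | _, .top => true
  | a, .quantitative => a == .quantitative || a == .discrete || a == .continuous
  | a, .qualitative => a == .qualitative || a == .nominal || a == .ordinal || a == .temporal
  | a, b => a == b

theorem colSub_iff_colSubBool {a b : ColTy} : ColSub a b ↔ colSubBool a b = true := by
  constructor
  · intro h
    induction h with
    | refl => cases a <;> rfl
    | tail _ ax ih => cases ax <;> cases a <;> revert ih <;> decide
  · intro h
    cases a <;> cases b <;> simp only [colSubBool] at h <;>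
      first
      | exact .refl
      | exact .single (by constructor)
      | exact .tail (.single (by constructor)) (by constructor)
      | exact absurd h (by decide)

instance : DecidableRel ColSub := fun _ _ => decidable_of_iff _ colSub_iff_colSubBool.symm

theorem colCompat_of_colSub_of_colSub {a b c : ColTy} (hb : ColSub a b) (hc : ColSub a c) :
    ColCompat b c := by
  revert hb hc
  unfold ColCompat
  cases a <;> cases b <;> cases c <;> decide

def colMeet (a b : ColTy) : ColTy := if ColSub a b then a else b

theorem colSub_colMeet_right (a b : ColTy) : ColSub (colMeet a b) b := by
  unfold colMeet
  split_ifs with h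
  exacts [h, .refl]

theorem ColCompat.colSub_colMeet_left {a b : ColTy} (h : ColCompat a b) :
    ColSub (colMeet a b) a := by
  unfold colMeet
  split_ifs with hab
  exacts [.refl, h.resolve_left hab]

namespace Finmap

variable {α : Type*} {β : α → Type*} [DecidableEq α]

def restrict (σ : Finmap β) (s : Finset α) : Finmap β :=
  keysLookupEquiv.symm
    ⟨(σ.keys ∩ s, fun a => if a ∈ s then σ.lookup a else none), fun a => by
      by_cases ha : a ∈ s <;> simp [ha, lookup_isSome, mem_keys]⟩

@[simp]
theorem keys_restrict (σ : Finmap β) (s : Finset α) : (σ.restrict s).keys = σ.keys ∩ s := by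
  simp [restrict]

@[simp]
theorem lookup_restrict (σ : Finmap β) (s : Finset α) (a : α) :
    (σ.restrict s).lookup a = if a ∈ s then σ.lookup a else none := by
  simp [restrict]

def unionWith (f : ∀ a, β a → β a → β a) (σ₁ σ₂ : Finmap β) : Finmap β :=
  keysLookupEquiv.symm
    ⟨(σ₁.keys ∪ σ₂.keys, fun a => Option.merge (f a) (σ₁.lookup a) (σ₂.lookup a)), fun a => by
      simp [Option.isSome_merge, lookup_isSome, mem_keys]⟩

@[simp]
theorem lookup_unionWith (f : ∀ a, β a → β a → β a) (σ₁ σ₂ : Finmap β) (a : α) :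
    (unionWith f σ₁ σ₂).lookup a = Option.merge (f a) (σ₁.lookup a) (σ₂.lookup a) := by
  simp [unionWith]

end Finmap

theorem TableSub.exists_lookup {σ σ' : Schema} (h : TableSub σ σ') {c : String} {τ' : ColTy}
    (hc : σ'.lookup c = some τ') : ∃ τ, σ.lookup c = some τ ∧ ColSub τ τ' := by
  induction h generalizing τ' with
  | width σ₁ σ₂ h => exact ⟨τ', h c τ' hc, .refl⟩
  | depth σ₁ σ₂ hk h =>
    have hmem : c ∈ σ₁ := by
      rw [← Finmap.mem_keys, hk, Finmap.mem_keys]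
      exact Finmap.mem_of_lookup_eq_some hc
    obtain ⟨τ, hτ⟩ := Finmap.mem_iff.mp hmem
    exact ⟨τ, hτ, h c τ τ' hτ hc⟩
  | trans _ _ ih₁ ih₂ =>
    obtain ⟨τm, hm, hsub⟩ := ih₂ hc
    obtain ⟨τ, hτ, hsub'⟩ := ih₁ hm
    exact ⟨τ, hτ, hsub'.trans hsub⟩

theorem tableSub_of_forall_lookup {σ σ' : Schema}
    (h : ∀ c τ', σ'.lookup c = some τ' → ∃ τ, σ.lookup c = some τ ∧ ColSub τ τ') :
    TableSub σ σ' := by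
  refine .trans (σ₂ := σ.restrict σ'.keys) (.width _ _ fun c τ hc => ?_) (.depth _ _ ?_ ?_)
  · rw [Finmap.lookup_restrict] at hc
    split_ifs at hc
    exact hc
  · rw [Finmap.keys_restrict, Finset.inter_eq_right]
    intro c hc
    obtain ⟨τ', hτ'⟩ := Finmap.mem_iff.mp (Finmap.mem_keys.mp hc)
    obtain ⟨τ, hτ, -⟩ := h c τ' hτ'
    exact Finmap.mem_keys.mpr (Finmap.mem_of_lookup_eq_some hτ)
  · intro c τ τ' hc hc'
    obtain ⟨τ₀, hτ₀, hsub⟩ := h c τ' hc'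
    rw [Finmap.lookup_restrict, if_pos (Finmap.mem_keys.mpr (Finmap.mem_of_lookup_eq_some hc')),
      hτ₀] at hc
    exact Option.some_injective _ hc ▸ hsub

def commonSubtype (σ₁ σ₂ : Schema) : Schema :=
  Finmap.unionWith (fun _ => colMeet) σ₁ σ₂

theorem tableSub_commonSubtype_left {σ₁ σ₂ : Schema} (h : TableCompat σ₁ σ₂) :
    TableSub (commonSubtype σ₁ σ₂) σ₁ := by
  refine tableSub_of_forall_lookup fun c τ₁ h₁ => ?_
  rw [commonSubtype, Finmap.lookup_unionWith, h₁]
  cases h₂ : σ₂.lookup c with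
  | none => exact ⟨τ₁, rfl, .refl⟩
  | some τ₂ => exact ⟨colMeet τ₁ τ₂, rfl, (h c τ₁ τ₂ h₁ h₂).colSub_colMeet_left⟩

theorem tableSub_commonSubtype_right (σ₁ σ₂ : Schema) :
    TableSub (commonSubtype σ₁ σ₂) σ₂ := by
  refine tableSub_of_forall_lookup fun c τ₂ h₂ => ?_
  rw [commonSubtype, Finmap.lookup_unionWith, h₂]
  cases σ₁.lookup c with
  | none => exact ⟨τ₂, rfl, .refl⟩
  | some τ₁ => exact ⟨colMeet τ₁ τ₂, rfl, colSub_colMeet_right τ₁ τ₂⟩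

theorem tableCompat_of_tableSub_of_tableSub {σ σ₁ σ₂ : Schema} (h₁ : TableSub σ σ₁)
    (h₂ : TableSub σ σ₂) : TableCompat σ₁ σ₂ := by
  intro c τ₁ τ₂ hc₁ hc₂
  obtain ⟨τ, hτ, hsub₁⟩ := h₁.exists_lookup hc₁
  obtain ⟨τ', hτ', hsub₂⟩ := h₂.exists_lookup hc₂
  obtain rfl : τ = τ' := Option.some_injective _ (hτ.symm.trans hτ')
  exact colCompat_of_colSub_of_colSub hsub₁ hsub₂

/-- Two table types are compatible iff they have a common subtype; in particular,
    incompatible table types have no common subtype. -/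
theorem tableCompat_iff_exists_common_subtype :
    (∀ σ₁ σ₂ : Schema,
      TableCompat σ₁ σ₂ ↔ ∃ σ : Schema, TableSub σ σ₁ ∧ TableSub σ σ₂) ∧
    (∀ σ₁ σ₂ : Schema, ¬ TableCompat σ₁ σ₂ →
      ∀ σ : Schema, ¬ (TableSub σ σ₁ ∧ TableSub σ σ₂)) := by
  have key (σ₁ σ₂ : Schema) :
      TableCompat σ₁ σ₂ ↔ ∃ σ : Schema, TableSub σ σ₁ ∧ TableSub σ σ₂ :=
    ⟨fun h => ⟨commonSubtype σ₁ σ₂, tableSub_commonSubtype_left h,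
        tableSub_commonSubtype_right σ₁ σ₂⟩,
      fun ⟨_, h₁, h₂⟩ => tableCompat_of_tableSub_of_tableSub h₁ h₂⟩
  exact ⟨key, fun σ₁ σ₂ hn σ hσ => hn ((key σ₁ σ₂).mpr ⟨σ, hσ⟩)⟩
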